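/- For every interval I and integrable A: A_0(I) ≥ |I|·min(1/100, DA(I,1/10)/100), where DA(I,1/10) is the discrepancy norm and A_0 the A_0-measure. -/

import Mathlib

/-!
Compare the average `M` of `A` on `[a,b]` with its average `m` on a subinterval `[u,v]` of
length at least `t (b-a)`. One of `|M|`, `|m|` is at least `|m - M| / 2`, and a single interval
`J` on which `A` averages to `μ` already contributes `|J| min(1, |μ|)` to `A₀`. Either way
`t (b-a) min(1, |m - M|) ≤ 2 A₀`, and taking the supremum over `[u,v]` bounds `DA`.
-/

open MeasureTheory intervalIntegral

/-- The `A₀`-measure of an interval `[a,b]`. -/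
noncomputable def A0 (A : ℝ → ℝ) (a b : ℝ) : ℝ :=
  sSup { w : ℝ | ∃ (k : ℕ) (u v : ℕ → ℝ),
    (∀ i < k, a ≤ u i ∧ u i ≤ v i ∧ v i ≤ b) ∧
    (∀ i < k, ∀ i' < k, i ≠ i' → Disjoint (Set.Ioo (u i) (v i)) (Set.Ioo (u i') (v i'))) ∧
    w = ∑ i ∈ Finset.range k, min (v i - u i) |∫ x in (u i)..(v i), A x| }

/-- Average of `A` over `[u,v]`. -/
noncomputable def avg (A : ℝ → ℝ) (u v : ℝ) : ℝ := (∫ x in u..v, A x) / (v - u)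

/-- The `t`-norm of discrepancy of the interval `[a,b]`. -/
noncomputable def DA (A : ℝ → ℝ) (a b t : ℝ) : ℝ :=
  sSup { d : ℝ | ∃ u v, a ≤ u ∧ u < v ∧ v ≤ b ∧ t * (b - a) ≤ v - u ∧
    d = |avg A u v - avg A a b| }

section

variable {A : ℝ → ℝ} {a b : ℝ}

lemma sum_length_le_of_pairwiseDisjoint_Ioo {k : ℕ} {u v : ℕ → ℝ} (hab : a ≤ b)
    (hsub : ∀ i < k, a ≤ u i ∧ u i ≤ v i ∧ v i ≤ b)
    (hdisj : ∀ i < k, ∀ i' < k, i ≠ i' →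
      Disjoint (Set.Ioo (u i) (v i)) (Set.Ioo (u i') (v i'))) :
    ∑ i ∈ Finset.range k, (v i - u i) ≤ b - a := by
  have hunion : (⋃ i ∈ Finset.range k, Set.Ioo (u i) (v i)) ⊆ Set.Icc a b := by
    simp only [Set.iUnion_subset_iff, Finset.mem_range]
    intro i hi x hx
    obtain ⟨hau, -, hvb⟩ := hsub i hi
    exact ⟨hau.trans hx.1.le, hx.2.le.trans hvb⟩
  have hvol : volume (⋃ i ∈ Finset.range k, Set.Ioo (u i) (v i))
      = ENNReal.ofReal (∑ i ∈ Finset.range k, (v i - u i)) := by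
    rw [measure_biUnion_finset
        (fun i hi i' hi' hne => hdisj i (by simpa using hi) i' (by simpa using hi') hne)
        (fun _ _ => measurableSet_Ioo),
      ENNReal.ofReal_sum_of_nonneg
        (fun i hi => sub_nonneg.2 (hsub i (Finset.mem_range.1 hi)).2.1)]
    simp only [Real.volume_Ioo]
  rw [← ENNReal.ofReal_le_ofReal_iff (sub_nonneg.2 hab), ← hvol, ← Real.volume_Icc]
  exact measure_mono hunion

lemma sum_le_A0 {k : ℕ} {u v : ℕ → ℝ} (hsub : ∀ i < k, a ≤ u i ∧ u i ≤ v i ∧ v i ≤ b)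
    (hdisj : ∀ i < k, ∀ i' < k, i ≠ i' →
      Disjoint (Set.Ioo (u i) (v i)) (Set.Ioo (u i') (v i'))) :
    ∑ i ∈ Finset.range k, min (v i - u i) |∫ x in (u i)..(v i), A x| ≤ A0 A a b := by
  refine le_csSup ⟨max (b - a) 0, ?_⟩ ⟨k, u, v, hsub, hdisj, rfl⟩
  rintro w ⟨k', u', v', hsub', hdisj', rfl⟩
  rcases le_total a b with hab | hba
  · exact le_max_of_le_left <| (Finset.sum_le_sum fun i _ => min_le_left _ _).trans
      (sum_length_le_of_pairwiseDisjoint_Ioo hab hsub' hdisj')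
  · refine le_max_of_le_right (Finset.sum_nonpos fun i hi => ?_)
    obtain ⟨hau, huv, hvb⟩ := hsub' i (Finset.mem_range.1 hi)
    exact (min_le_left _ _).trans (by linarith)

lemma min_length_abs_integral_le_A0 {u v : ℝ} (hau : a ≤ u) (huv : u ≤ v) (hvb : v ≤ b) :
    min (v - u) |∫ x in u..v, A x| ≤ A0 A a b := by
  simpa using sum_le_A0 (k := 1) (u := fun _ => u) (v := fun _ => v) (A := A)
    (fun _ _ => ⟨hau, huv, hvb⟩) (fun i hi i' hi' hne => by omega)

lemma A0_nonneg (hab : a ≤ b) : 0 ≤ A0 A a b := by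
  simpa using min_length_abs_integral_le_A0 (A := A) le_rfl le_rfl hab

lemma abs_integral_eq_mul_abs_avg {u v : ℝ} (huv : u < v) :
    |∫ x in u..v, A x| = (v - u) * |avg A u v| := by
  rw [avg, abs_div, abs_of_pos (sub_pos.2 huv), mul_div_cancel₀ _ (sub_pos.2 huv).ne']

lemma mul_min_one_abs_avg_le_A0 {u v : ℝ} (hau : a ≤ u) (huv : u < v) (hvb : v ≤ b) :
    (v - u) * min 1 |avg A u v| ≤ A0 A a b := by
  have h := min_length_abs_integral_le_A0 (A := A) hau huv.le hvb
  rwa [abs_integral_eq_mul_abs_avg huv, ← mul_one (v - u), mul_assoc, one_mul,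
    ← mul_min_of_nonneg _ _ (sub_pos.2 huv).le] at h

lemma mul_min_one_abs_avg_sub_avg_le_A0 {t u v : ℝ} (ht : t ≤ 1) (hab : a < b)
    (hau : a ≤ u) (huv : u < v) (hvb : v ≤ b) (hlen : t * (b - a) ≤ v - u) :
    t * (b - a) * min 1 |avg A u v - avg A a b| ≤ 2 * A0 A a b := by
  set d := |avg A u v - avg A a b|
  have hhalf : min 1 d / 2 ≤ min 1 (d / 2) :=
    le_min (by linarith [min_le_left 1 d]) (by linarith [min_le_right 1 d])
  have hmin_nonneg : 0 ≤ min 1 d := le_min zero_le_one (abs_nonneg _)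
  have hsplit : d / 2 ≤ |avg A a b| ∨ d / 2 ≤ |avg A u v| := by
    by_contra! h
    linarith [abs_sub (avg A u v) (avg A a b)]
  rcases hsplit with hM | hm
  · have hI := mul_min_one_abs_avg_le_A0 (A := A) le_rfl hab le_rfl
    have hmono := min_le_min_left 1 hM
    nlinarith [mul_le_mul_of_nonneg_right ht (mul_nonneg (sub_pos.2 hab).le hmin_nonneg)]
  · have hJ := mul_min_one_abs_avg_le_A0 (A := A) hau huv hvb
    have hmono := min_le_min_left 1 hm
    nlinarith [mul_le_mul_of_nonneg_right hlen hmin_nonneg]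

lemma min_one_sSup_le {S : Set ℝ} {c : ℝ} (hc : 0 ≤ c) (h : ∀ d ∈ S, min 1 d ≤ c) :
    min 1 (sSup S) ≤ c := by
  rcases le_or_gt 1 c with hc1 | hc1
  · exact (min_le_left _ _).trans hc1
  · refine (min_le_right _ _).trans (Real.sSup_le (fun d hd => ?_) hc)
    have := h d hd
    rw [min_le_iff] at this
    exact this.resolve_left hc1.not_ge

lemma mul_min_one_DA_le_A0 {t : ℝ} (ht0 : 0 < t) (ht1 : t ≤ 1) (hab : a < b) :
    t * (b - a) * min 1 (DA A a b t) ≤ 2 * A0 A a b := by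
  have hpos : 0 < t * (b - a) := mul_pos ht0 (sub_pos.2 hab)
  rw [mul_comm, ← le_div_iff₀ hpos]
  refine min_one_sSup_le (div_nonneg (by linarith [A0_nonneg (A := A) hab.le]) hpos.le) ?_
  rintro d ⟨u, v, hau, huv, hvb, hlen, rfl⟩
  rw [le_div_iff₀ hpos, mul_comm]
  exact mul_min_one_abs_avg_sub_avg_le_A0 ht1 hab hau huv hvb hlen

end

theorem stmt_9_general (A : ℝ → ℝ) (a b : ℝ) (hab : a < b) :
    (b - a) * min (1 / 100) (DA A a b (1 / 10) / 100) ≤ A0 A a b := by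
  have hDA := mul_min_one_DA_le_A0 (A := A) (t := 1 / 10) (by norm_num) (by norm_num) hab
  have hA0 := A0_nonneg (A := A) hab.le
  rw [min_div_div_right (by norm_num : (0 : ℝ) ≤ 100)]
  linarith

/-- The `A₀`-measure dominates the discrepancy norm:
`A₀(I) ≥ |I|·min(1/100, DA(I,1/10)/100)`. -/
theorem stmt_9 (A : ℝ → ℝ) (a b : ℝ) (hab : a < b)
    (hA : IntegrableOn A (Set.Icc a b) volume) :
    (b - a) * min (1 / 100) (DA A a b (1 / 10) / 100) ≤ A0 A a b :=
  stmt_9_general A a b hab
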